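/- Let Δ be an n-simplex in ℝⁿ, the convex hull of affinely independent points v₀, …, v_n, and let K ⊆ Δ be a nonempty compact convex set. Suppose that K ∩ F = ∅ for every face F of Δ of dimension at most n-2; that is, for every subset s ⊆ {v₀, …, v_n} with at most n-1 elements, K does not meet the convex hull of s. Then there exists ε > 1 (independent of direction) such that for every unit vector u ∈ ℝⁿ there exists v ∈ u^⊥ with ε·K_u + v ⊆ Δ_u, where K_u and Δ_u denote the orthogonal projections of K and Δ onto u^⊥ and ε·K_u = {εx : x ∈ K_u}. -/

import Mathlib

open Set

/-- The orthogonal projection of `ℝⁿ` onto a subspace `ξ`, viewed as a map `ℝⁿ → ℝⁿ`. -/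
noncomputable def projSub {n : ℕ} (ξ : Submodule ℝ (EuclideanSpace ℝ (Fin n)))
    (x : EuclideanSpace ℝ (Fin n)) : EuclideanSpace ℝ (Fin n) :=
  (ξ.orthogonalProjectionOnto x : EuclideanSpace ℝ (Fin n))

/-- The orthogonal projection of `ℝⁿ` onto the hyperplane `u^⊥`. -/
noncomputable def projHyp {n : ℕ} (u : EuclideanSpace ℝ (Fin n)) :
    EuclideanSpace ℝ (Fin n) → EuclideanSpace ℝ (Fin n) :=
  projSub ((Submodule.span ℝ {u})ᗮ)

/-- `IsSimplex n Δ` : `Δ` is an `n`-simplex in `ℝⁿ`, i.e. the convex hull of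
`n+1` affinely independent points. -/
def IsSimplex (n : ℕ) (Δ : Set (EuclideanSpace ℝ (Fin n))) : Prop :=
  ∃ p : Fin (n + 1) → EuclideanSpace ℝ (Fin n),
    AffineIndependent ℝ p ∧ Δ = convexHull ℝ (Set.range p)

/-!
Barycentric coordinates are nonnegative on `Δ`, and a point of `K` cannot have two vanishing
coordinates, since it would then lie on a face spanned by `n - 1` vertices. By compactness there
is `α > 0` such that every point of `K` has at most one coordinate below `α`.

For a direction `u`, the `n + 1` projected vertices are affinely dependent in the
`(n - 1)`-dimensional hyperplane `u^⊥`, so Radon's theorem yields a point `m` of `Δ_u` that is the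
shadow of a point on every facet of `Δ`. If the smallest coordinate of `x ∈ K` is the `j`-th one,
pick `y` on the facet opposite the `j`-th vertex with shadow `m`: every coordinate of
`x + α (x - y)` is still nonnegative, so this point lies in `Δ`, and its shadow is
`(1 + α) x_u - α m`. Hence `ε = 1 + α` and `v = -α m` work for every `u`.
-/

theorem IsCompact.exists_pos_forall_le {X ι : Type*} [TopologicalSpace X] [Finite ι]
    {K : Set X} (hK : IsCompact K) {f : ι → X → ℝ} (hf : ∀ i, ContinuousOn (f i) K)
    (hpos : ∀ i, ∀ x ∈ K, 0 < f i x) : ∃ α > 0, ∀ i, ∀ x ∈ K, α ≤ f i x := by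
  have hev : ∀ i, ∀ᶠ α in nhdsWithin (0 : ℝ) (Ioi 0), ∀ x ∈ K, α ≤ f i x := fun i => by
    obtain ⟨a, ha, hle⟩ := hK.exists_forall_le' (hf i) (hpos i)
    filter_upwards [Ioo_mem_nhdsGT ha] with α hα x hx using hα.2.le.trans (hle x hx)
  obtain ⟨α, hαK, hα⟩ := ((Filter.eventually_all.2 hev).and self_mem_nhdsWithin).exists
  exact ⟨α, hα, hαK⟩

section Algebraic

variable {E F : Type*} [AddCommGroup E] [Module ℝ E] [AddCommGroup F] [Module ℝ F]

theorem AffineIndependent.card_le_finrank_succ_of_forall_mem [FiniteDimensional ℝ E]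
    {ι : Type*} [Fintype ι] {S : Submodule ℝ E} {q : ι → E} (h : AffineIndependent ℝ q)
    (hq : ∀ i, q i ∈ S) : Fintype.card ι ≤ Module.finrank ℝ S + 1 := by
  have hle : vectorSpan ℝ (range q) ≤ S := by
    rw [vectorSpan_def, Submodule.span_le]
    rintro _ ⟨_, ⟨i, rfl⟩, _, ⟨j, rfl⟩, rfl⟩
    exact S.sub_mem (hq i) (hq j)
  exact h.card_le_finrank_succ.trans (Nat.add_le_add_right (Submodule.finrank_mono hle) 1)

namespace AffineBasis

variable {ι : Type*} (b : AffineBasis ι ℝ E)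

theorem coord_nonneg_of_mem_convexHull {x : E} (hx : x ∈ convexHull ℝ (range b)) (i : ι) :
    0 ≤ b.coord i x := by
  rw [b.convexHull_eq_nonneg_coord] at hx
  exact hx i

theorem coord_le_one_of_mem_convexHull {x : E} (hx : x ∈ convexHull ℝ (range b)) (i : ι) :
    b.coord i x ≤ 1 := by
  classical
  refine convexHull_min ?_ ((convex_Iic 1).affine_preimage (b.coord i)) hx
  rintro _ ⟨k, rfl⟩
  simp only [mem_preimage, mem_Iic, b.coord_apply]
  split_ifs <;> norm_num

theorem convexHull_image_subset_coord_eq_zero {s : Set ι} {j : ι} (hj : j ∉ s) :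
    convexHull ℝ (b '' s) ⊆ convexHull ℝ (range b) ∩ {y | b.coord j y = 0} := by
  refine convexHull_min ?_ ((convex_convexHull ℝ _).inter ?_)
  · rintro _ ⟨k, hk, rfl⟩
    exact ⟨subset_convexHull ℝ _ (mem_range_self k), b.coord_apply_ne fun h => hj (h ▸ hk)⟩
  · exact (convex_singleton (0 : ℝ)).affine_preimage (b.coord j)

theorem mem_convexHull_image_of_coord_eq_zero [Fintype ι] {x : E}
    (hx : x ∈ convexHull ℝ (range b)) {s : Finset ι} (hs : ∀ k ∉ s, b.coord k x = 0) :
    x ∈ convexHull ℝ (b '' s) := by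
  have hsum : ∑ k ∈ s, b.coord k x = 1 := by
    rw [Finset.sum_subset s.subset_univ fun k _ hk => hs k hk, b.sum_coord_apply_eq_one]
  have hcomb : ∑ k ∈ s, b.coord k x • b k = x := by
    rw [Finset.sum_subset s.subset_univ fun k _ hk => by rw [hs k hk, zero_smul],
      b.linear_combination_coord_eq_self]
  rw [← hcomb]
  exact (convex_convexHull ℝ _).sum_mem (fun k _ => b.coord_nonneg_of_mem_convexHull hx k) hsum
    fun k hk => subset_convexHull ℝ _ (mem_image_of_mem b hk)

theorem exists_forall_mem_image_coord_eq_zero (L : E →ᵃ[ℝ] F)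
    (hdep : ¬AffineIndependent ℝ (L ∘ b)) :
    ∃ m, ∀ j, m ∈ L '' (convexHull ℝ (range b) ∩ {y | b.coord j y = 0}) := by
  obtain ⟨I, m, hmI, hmIc⟩ := Convex.radon_partition hdep
  refine ⟨m, fun j => ?_⟩
  have himage : ∀ s : Set ι, convexHull ℝ ((L ∘ b) '' s) = L '' convexHull ℝ (b '' s) :=
    fun s => by rw [image_comp, L.image_convexHull]
  by_cases hj : j ∈ I
  · rw [himage] at hmIc
    exact image_mono (b.convexHull_image_subset_coord_eq_zero (not_not.2 hj)) hmIc
  · rw [himage] at hmI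
    exact image_mono (b.convexHull_image_subset_coord_eq_zero hj) hmI

theorem lineMap_one_add_mem_convexHull {x y : E} {α : ℝ} {j : ι} (hα : 0 ≤ α)
    (hy : y ∈ convexHull ℝ (range b)) (hyj : b.coord j y = 0) (hxj : 0 ≤ b.coord j x)
    (hx : ∀ i, i ≠ j → α ≤ b.coord i x) :
    AffineMap.lineMap y x (1 + α) ∈ convexHull ℝ (range b) := by
  rw [b.convexHull_eq_nonneg_coord]
  intro i
  rw [AffineMap.apply_lineMap, AffineMap.lineMap_apply_ring]
  rcases eq_or_ne i j with rfl | hij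
  · rw [hyj]
    nlinarith
  · have hyi := b.coord_le_one_of_mem_convexHull hy i
    have hxi := hx i hij
    nlinarith [mul_le_mul_of_nonneg_left hyi hα, mul_nonneg hα (hα.trans hxi)]

end AffineBasis

end Algebraic

theorem AffineBasis.exists_pos_le_coord_of_ne {E ι : Type*} [NormedAddCommGroup E]
    [NormedSpace ℝ E] [FiniteDimensional ℝ E] [Fintype ι] (b : AffineBasis ι ℝ E) {K : Set E}
    (hK : IsCompact K) (hKΔ : K ⊆ convexHull ℝ (range b))
    (hface : ∀ s : Finset ι, s.card + 2 ≤ Fintype.card ι → K ∩ convexHull ℝ (b '' s) = ∅) :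
    ∃ α > 0, ∀ x ∈ K, ∃ j, ∀ i, i ≠ j → α ≤ b.coord i x := by
  classical
  let f : {ij : ι × ι // ij.1 ≠ ij.2} → E → ℝ :=
    fun ij x => max (b.coord ij.1.1 x) (b.coord ij.1.2 x)
  have hf : ∀ ij, ContinuousOn (f ij) K := fun ij =>
    ((b.coord _).continuous_of_finiteDimensional.max
      (b.coord _).continuous_of_finiteDimensional).continuousOn
  have hpos : ∀ ij, ∀ x ∈ K, 0 < f ij x := by
    rintro ⟨⟨i, j⟩, hij⟩ x hxK
    by_contra! hle
    have hnonneg := b.coord_nonneg_of_mem_convexHull (hKΔ hxK)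
    have hi : b.coord i x = 0 := le_antisymm ((le_max_left _ _).trans hle) (hnonneg i)
    have hj : b.coord j x = 0 := le_antisymm ((le_max_right _ _).trans hle) (hnonneg j)
    have hcard : ({i, j}ᶜ : Finset ι).card + 2 ≤ Fintype.card ι := by
      have h2 := Finset.card_le_univ ({i, j} : Finset ι)
      rw [Finset.card_pair hij] at h2
      rw [Finset.card_compl, Finset.card_pair hij]
      omega
    refine (hface _ hcard).subset ⟨hxK, b.mem_convexHull_image_of_coord_eq_zero (hKΔ hxK) ?_⟩
    intro k hk
    simp only [Finset.mem_compl, Finset.mem_insert, Finset.mem_singleton, not_not] at hk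
    rcases hk with rfl | rfl
    exacts [hi, hj]
  obtain ⟨α, hα, hαK⟩ := hK.exists_pos_forall_le hf hpos
  refine ⟨α, hα, fun x hx => ?_⟩
  have := b.nonempty
  obtain ⟨j, -, hj⟩ := Finset.univ.exists_min_image (b.coord · x) Finset.univ_nonempty
  refine ⟨j, fun i hij => ?_⟩
  simpa only [f, max_eq_left (hj i (Finset.mem_univ i))] using hαK ⟨(i, j), hij⟩ x hx

theorem not_affineIndependent_starProjection_comp {E ι : Type*} [NormedAddCommGroup E]
    [InnerProductSpace ℝ E] [FiniteDimensional ℝ E] [Fintype ι] {u : E} (hu : u ≠ 0)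
    (hcard : Module.finrank ℝ E < Fintype.card ι) (q : ι → E) :
    ¬AffineIndependent ℝ ((ℝ ∙ u)ᗮ.starProjection ∘ q) := fun hind => by
  have hle := hind.card_le_finrank_succ_of_forall_mem fun i => (ℝ ∙ u)ᗮ.starProjection_apply_mem _
  have hS := Submodule.finrank_add_finrank_orthogonal (ℝ ∙ u)
  rw [finrank_span_singleton hu] at hS
  omega

theorem stmt_10_general {n : ℕ} (p : Fin (n + 1) → EuclideanSpace ℝ (Fin n))
    (hp : AffineIndependent ℝ p) (Δ : Set (EuclideanSpace ℝ (Fin n)))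
    (hΔ : Δ = convexHull ℝ (Set.range p))
    (K : Set (EuclideanSpace ℝ (Fin n)))
    (hKcp : IsCompact K) (hKΔ : K ⊆ Δ)
    (hface : ∀ s : Finset (Fin (n + 1)), s.card ≤ n - 1 →
      K ∩ convexHull ℝ (p '' ↑s) = ∅) :
    ∃ ε : ℝ, 1 < ε ∧ ∀ u : EuclideanSpace ℝ (Fin n), ‖u‖ = 1 →
      ∃ v ∈ (Submodule.span ℝ {u})ᗮ,
        (fun x => ε • x + v) '' (projHyp u '' K) ⊆ projHyp u '' Δ := by
  let b : AffineBasis (Fin (n + 1)) ℝ _ :=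
    ⟨p, hp, hp.affineSpan_eq_top_iff_card_eq_finrank_add_one.2 (by simp)⟩
  have hΔb : Δ = convexHull ℝ (range b) := hΔ
  obtain ⟨α, hα, hαK⟩ := b.exists_pos_le_coord_of_ne hKcp (hΔb ▸ hKΔ)
    fun s hs => hface s (by rw [Fintype.card_fin] at hs; omega)
  refine ⟨1 + α, by linarith, fun u hu => ?_⟩
  set S := (Submodule.span ℝ {u})ᗮ
  let L := S.starProjection.toLinearMap.toAffineMap
  have hdep : ¬AffineIndependent ℝ (L ∘ b) :=
    not_affineIndependent_starProjection_comp (norm_ne_zero_iff.1 (by simp [hu])) (by simp) b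
  obtain ⟨m, hm⟩ := b.exists_forall_mem_image_coord_eq_zero L hdep
  obtain ⟨y₀, -, rfl⟩ := hm 0
  refine ⟨-(α • L y₀), S.neg_mem (S.smul_mem _ (S.starProjection_apply_mem _)), ?_⟩
  rintro _ ⟨_, ⟨x, hxK, rfl⟩, rfl⟩
  obtain ⟨j, hx⟩ := hαK x hxK
  obtain ⟨y, ⟨hyΔ, hyj⟩, hy⟩ := hm j
  have hxj := b.coord_nonneg_of_mem_convexHull (hΔb ▸ hKΔ hxK) j
  refine ⟨AffineMap.lineMap y x (1 + α),
    hΔb ▸ b.lineMap_one_add_mem_convexHull hα.le hyΔ hyj hxj hx, ?_⟩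
  change L _ = (1 + α) • L x + _
  rw [AffineMap.apply_lineMap, AffineMap.lineMap_apply_module, hy]
  module

/-- If K avoids all faces of the simplex Δ of dimension at most n-2, then some
dilate εK with ε > 1 has all its shadows translating into those of Δ. -/
theorem stmt_10 {n : ℕ} (hn : 2 ≤ n) (p : Fin (n + 1) → EuclideanSpace ℝ (Fin n))
    (hp : AffineIndependent ℝ p) (Δ : Set (EuclideanSpace ℝ (Fin n)))
    (hΔ : Δ = convexHull ℝ (Set.range p))
    (K : Set (EuclideanSpace ℝ (Fin n)))
    (hKne : K.Nonempty) (hKcp : IsCompact K) (hKcv : Convex ℝ K) (hKΔ : K ⊆ Δ)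
    (hface : ∀ s : Finset (Fin (n + 1)), s.card ≤ n - 1 →
      K ∩ convexHull ℝ (p '' ↑s) = ∅) :
    ∃ ε : ℝ, 1 < ε ∧ ∀ u : EuclideanSpace ℝ (Fin n), ‖u‖ = 1 →
      ∃ v ∈ (Submodule.span ℝ {u})ᗮ,
        (fun x => ε • x + v) '' (projHyp u '' K) ⊆ projHyp u '' Δ :=
  stmt_10_general p hp Δ hΔ K hKcp hKΔ hface
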